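/- Let σ_k = k^{-1/2-α} for α > 1/2 and let H̄ satisfy H̄(x) ≤ c_2/x² for x ≥ 1. Fix β with 0 < β ≤ α and D > 0. Then there exist D' and constants C_3, C_4 such that for every integer K ≥ 2 and every ε ≥ D' K^{-β} log K: ∏_{k>K} (1 − 2 H̄(ε k^α / (D log k))) ≥ exp(−C_4 K^{1 + 2(β−α)}) ≥ exp(−C_4 K). -/

import Mathlib

/-! With `δ = (2α - 1)/4`, the growth bound `log k ≤ C_δ log K (k/K)^δ` (for `2 ≤ K ≤ k`,
with `C_δ = 1 + 1/(δ log 2)`) and the choice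
`D' = (1 + 4c₂) D C_δ` make the argument `x_k = ε k^α / (D log k)` at least
`(1 + 4c₂) K^(δ-β) k^(α-δ) ≥ 1 + 4c₂` for every `k > K`. The quadratic tail bound then gives
`2 H̄(x_k) ≤ 1/2` and `2 H̄(x_k) ≤ 2c₂ K^(2(β-δ)) k^(-(1+2δ))`, and `log (1 - y) ≥ -2y`
reduces the product to `exp (-4c₂ K^(2(β-δ)) ∑_{k>K} k^(-(1+2δ)))`. The integral test bounds the
sum by `K^(-2δ)/(2δ)`, and `2(β-δ) - 2δ = 1 + 2(β - α)`. -/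

open Real

lemma tsum_nat_add_rpow_le {r : ℝ} (hr : 0 < r) {N : ℕ} (hN : 1 ≤ N) :
    ∑' n : ℕ, ((n + N + 1 : ℕ) : ℝ) ^ (-(1 + r)) ≤ (N : ℝ) ^ (-r) / r := by
  have hN0 : (0 : ℝ) < N := by exact_mod_cast hN
  have hexp : -(1 + r) < -1 := by linarith
  have anti : AntitoneOn (fun x : ℝ => x ^ (-(1 + r))) (Set.Ici N) := fun x hx _ _ hxy =>
    rpow_le_rpow_of_nonpos (hN0.trans_le hx) hxy (by linarith)
  calc _ ≤ ∫ x in Set.Ioi (N : ℝ), x ^ (-(1 + r)) :=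
        anti.tsum_comp_add_le_integral N (integrableOn_Ioi_rpow_of_lt hexp hN0)
          fun t ht => (rpow_pos_of_pos (hN0.trans ht) _).le
    _ = (N : ℝ) ^ (-r) / r := by
        rw [integral_Ioi_rpow_of_lt hexp hN0, show -(1 + r) + 1 = -r by ring, neg_div_neg_eq]

lemma neg_two_mul_le_log_one_sub {y : ℝ} (hy0 : 0 ≤ y) (hy1 : y ≤ 1 / 2) :
    -(2 * y) ≤ log (1 - y) := by
  have hpos : 0 < 1 - y := by linarith
  have hinv : (1 - y)⁻¹ ≤ 1 + 2 * y := by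
    rw [inv_le_iff_one_le_mul₀ hpos]; nlinarith
  linarith [one_sub_inv_le_log_of_pos hpos]

lemma exp_neg_two_mul_tsum_le_tprod_one_sub {ι : Type*} {y : ι → ℝ} (hy0 : ∀ i, 0 ≤ y i)
    (hy1 : ∀ i, y i ≤ 1 / 2) (hy : Summable y) :
    exp (-(2 * ∑' i, y i)) ≤ ∏' i, (1 - y i) := by
  have hlog : Summable fun i => log (1 - y i) := by
    simpa only [← sub_eq_add_neg] using summable_log_one_add_of_summable hy.neg
  rw [← rexp_tsum_eq_tprod (fun i => by linarith [hy1 i]) hlog, exp_le_exp, ← tsum_mul_left,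
    ← tsum_neg]
  exact (hy.mul_left 2).neg.tsum_le_tsum (fun i => neg_two_mul_le_log_one_sub (hy0 i) (hy1 i)) hlog

lemma exp_neg_le_tprod_one_sub_of_le_rpow {K : ℕ} (hK : 1 ≤ K) {r C : ℝ} (hr : 0 < r)
    {y : ℕ → ℝ} (hy0 : ∀ k, K < k → 0 ≤ y k) (hy1 : ∀ k, K < k → y k ≤ 1 / 2)
    (hyC : ∀ k, K < k → y k ≤ C * (k : ℝ) ^ (-(1 + r))) :
    exp (-(2 * C * (K : ℝ) ^ (-r) / r)) ≤ ∏' k, if K < k then 1 - y k else 1 := by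
  have hshift (n : ℕ) : K < n + K + 1 := by omega
  have hinj : Function.Injective fun n : ℕ => n + K + 1 := fun a b h => by simpa using h
  have hsupp : Function.mulSupport (fun k => if K < k then 1 - y k else 1) ⊆
      Set.range fun n : ℕ => n + K + 1 := fun k hk => by
    have : K < k := by by_contra h; exact hk (if_neg h)
    exact ⟨k - K - 1, show k - K - 1 + K + 1 = k by omega⟩
  rw [← hinj.tprod_eq hsupp]
  simp only [if_pos (hshift _)]
  have hC : 0 ≤ C := by
    have h := (hy0 _ (hshift 0)).trans (hyC _ (hshift 0))
    exact nonneg_of_mul_nonneg_left h (rpow_pos_of_pos (by norm_cast; omega) _)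
  have hu : Summable fun n : ℕ => ((n + K + 1 : ℕ) : ℝ) ^ (-(1 + r)) :=
    (summable_nat_rpow.2 (by linarith)).comp_injective hinj
  have hyu (n : ℕ) := hyC _ (hshift n)
  have hys : Summable fun n => y (n + K + 1) :=
    (hu.mul_left C).of_nonneg_of_le (fun n => hy0 _ (hshift n)) hyu
  refine le_trans ?_ (exp_neg_two_mul_tsum_le_tprod_one_sub (fun n => hy0 _ (hshift n))
    (fun n => hy1 _ (hshift n)) hys)
  rw [exp_le_exp, neg_le_neg_iff, mul_div_assoc, mul_assoc]
  gcongr 2 * ?_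
  calc ∑' n, y (n + K + 1) ≤ ∑' n, C * ((n + K + 1 : ℕ) : ℝ) ^ (-(1 + r)) :=
        hys.tsum_le_tsum hyu (hu.mul_left C)
    _ ≤ C * ((K : ℝ) ^ (-r) / r) := by
        rw [tsum_mul_left]; exact mul_le_mul_of_nonneg_left (tsum_nat_add_rpow_le hr hK) hC

lemma log_le_log_mul_div_rpow {γ : ℝ} (hγ : 0 < γ) {K k : ℝ} (hK : 2 ≤ K) (hk : K ≤ k) :
    log k ≤ (1 + 1 / (γ * log 2)) * log K * (k / K) ^ γ := by
  have hK0 : 0 < K := by linarith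
  have hlog2 : 0 < log 2 := log_pos (by norm_num)
  have hlogK : log 2 ≤ log K := log_le_log (by norm_num) hK
  have hX : 1 ≤ (k / K) ^ γ := one_le_rpow ((one_le_div hK0).2 hk) hγ.le
  calc log k = log K + log (k / K) := by
        rw [log_div (by linarith) hK0.ne']; ring
    _ ≤ log K * (k / K) ^ γ + log K / log 2 * ((k / K) ^ γ / γ) := by
        gcongr
        · exact le_mul_of_one_le_right (by linarith) hX
        · exact (log_le_rpow_div (div_nonneg (by linarith) hK0.le) hγ).trans
            (le_mul_of_one_le_left (div_nonneg (by linarith) hγ.le) ((one_le_div hlog2).2 hlogK))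
    _ = (1 + 1 / (γ * log 2)) * log K * (k / K) ^ γ := by field_simp

lemma mul_rpow_le_div_log {α β δ D M ε K k : ℝ} (hδ : 0 < δ) (hD : 0 < D) (hM : 0 ≤ M)
    (hK : 2 ≤ K) (hk : K ≤ k) (hε : M * D * (1 + 1 / (δ * log 2)) * K ^ (-β) * log K ≤ ε) :
    M * (K ^ (δ - β) * k ^ (α - δ)) ≤ ε * k ^ α / (D * log k) := by
  have hK0 : 0 < K := by linarith
  have hk0 : 0 < k := by linarith
  rw [le_div_iff₀ (mul_pos hD (log_pos (by linarith)))]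
  have hsplit : K ^ (δ - β) * k ^ (α - δ) * (k / K) ^ δ = K ^ (-β) * k ^ α := by
    rw [sub_eq_add_neg δ, rpow_add hK0, rpow_sub hk0, div_rpow hk0.le hK0.le]
    field_simp
  calc M * (K ^ (δ - β) * k ^ (α - δ)) * (D * log k)
      ≤ M * (K ^ (δ - β) * k ^ (α - δ)) * (D * ((1 + 1 / (δ * log 2)) * log K * (k / K) ^ δ)) := by
        gcongr; exact log_le_log_mul_div_rpow hδ hK hk
    _ = M * D * (1 + 1 / (δ * log 2)) * K ^ (-β) * log K * k ^ α := by
        linear_combination (M * D * (1 + 1 / (δ * log 2)) * log K) * hsplit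
    _ ≤ ε * k ^ α := by gcongr

lemma tail_le_of_mul_le {Hbar : ℝ → ℝ} {c M P x : ℝ} (htail : ∀ x, 1 ≤ x → Hbar x ≤ c / x ^ 2)
    (hc : 0 ≤ c) (hM : 1 ≤ M) (hcM : 4 * c ≤ M) (hP : 1 ≤ P) (hx : M * P ≤ x) :
    Hbar x ≤ 1 / 4 ∧ Hbar x ≤ c / P ^ 2 := by
  have hMP : M ≤ M * P := le_mul_of_one_le_right (by linarith) hP
  have hPMP : P ≤ M * P := le_mul_of_one_le_left (by linarith) hM
  have hle : Hbar x ≤ c / (M * P) ^ 2 := (htail x (by linarith)).trans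
    (div_le_div_of_nonneg_left hc (by positivity) (pow_le_pow_left₀ (by linarith) hx 2))
  refine ⟨hle.trans ?_, hle.trans ?_⟩
  · rw [div_le_iff₀ (by positivity)]; nlinarith
  · exact div_le_div_of_nonneg_left hc (by positivity) (pow_le_pow_left₀ (by linarith) hPMP 2)

lemma div_sq_rpow_mul_rpow {a b : ℝ} (ha : 0 ≤ a) (hb : 0 ≤ b) (c s t : ℝ) :
    c / (a ^ s * b ^ t) ^ 2 = c * a ^ (-2 * s) * b ^ (-2 * t) := by
  rw [div_eq_mul_inv, mul_pow, ← rpow_mul_natCast ha, ← rpow_mul_natCast hb, mul_inv,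
    ← rpow_neg ha, ← rpow_neg hb]
  ring_nf

lemma tail_at_div_log_le {Hbar : ℝ → ℝ} {c₂ α β δ D ε K k : ℝ}
    (htail : ∀ x, 1 ≤ x → Hbar x ≤ c₂ / x ^ 2) (hc₂ : 0 ≤ c₂) (hδ : 0 < δ) (hδα : δ ≤ α)
    (hβα : β ≤ α) (hD : 0 < D) (hK : 2 ≤ K) (hk : K ≤ k)
    (hε : (1 + 4 * c₂) * D * (1 + 1 / (δ * log 2)) * K ^ (-β) * log K ≤ ε) :
    Hbar (ε * k ^ α / (D * log k)) ≤ 1 / 4 ∧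
      Hbar (ε * k ^ α / (D * log k)) ≤ c₂ * K ^ (-2 * (δ - β)) * k ^ (-2 * (α - δ)) := by
  have hK0 : 0 < K := by linarith
  have hαδ : 0 ≤ α - δ := by linarith
  have hP : 1 ≤ K ^ (δ - β) * k ^ (α - δ) := calc
    1 ≤ K ^ (α - β) := one_le_rpow (by linarith) (by linarith)
    _ = K ^ (δ - β) * K ^ (α - δ) := by rw [← rpow_add hK0]; ring_nf
    _ ≤ K ^ (δ - β) * k ^ (α - δ) := by gcongr
  rw [← div_sq_rpow_mul_rpow hK0.le (by linarith)]
  exact tail_le_of_mul_le htail hc₂ (by linarith) (by linarith) hP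
    (mul_rpow_le_div_log hδ hD (by positivity) hK hk hε)

theorem HT_highfreq_prior_mass_general
    (Hbar : ℝ → ℝ) (c₂ α β D : ℝ) (hc₂ : 0 < c₂) (hα : 1 / 2 < α)
    (hβα : β ≤ α) (hD : 0 < D)
    (hnonneg : ∀ x, 0 ≤ Hbar x)
    (htail : ∀ x : ℝ, 1 ≤ x → Hbar x ≤ c₂ / x ^ 2) :
    ∃ D' C₄ : ℝ, 0 < D' ∧ 0 < C₄ ∧
      ∀ K : ℕ, 2 ≤ K → ∀ ε : ℝ, D' * (K : ℝ) ^ (-β) * Real.log K ≤ ε →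
        ((∏' k : ℕ, (if K < k then
              1 - 2 * Hbar (ε * (k : ℝ) ^ α / (D * Real.log k)) else 1)) ≥
            Real.exp (-C₄ * (K : ℝ) ^ (1 + 2 * (β - α)))) ∧
          Real.exp (-C₄ * (K : ℝ) ^ (1 + 2 * (β - α))) ≥ Real.exp (-C₄ * K) := by
  set δ := (2 * α - 1) / 4 with hδ_def
  have hδ : 0 < δ := by rw [hδ_def]; linarith
  refine ⟨(1 + 4 * c₂) * D * (1 + 1 / (δ * log 2)), 2 * c₂ / δ, by positivity, by positivity,
    fun K hK ε hε => ⟨?_, ?_⟩⟩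
  · have hK2 : (2 : ℝ) ≤ K := by exact_mod_cast hK
    have hk_exp : -2 * (α - δ) = -(1 + 2 * δ) := by rw [hδ_def]; ring
    have hK_exp : (K : ℝ) ^ (-2 * (δ - β)) * (K : ℝ) ^ (-(2 * δ)) = K ^ (1 + 2 * (β - α)) := by
      rw [← rpow_add (by linarith)]; congr 1; rw [hδ_def]; ring
    have hHbar (k : ℕ) (hk : K < k) := tail_at_div_log_le htail hc₂.le hδ
      (by rw [hδ_def]; linarith) hβα hD hK2 (show (K : ℝ) ≤ k by exact_mod_cast hk.le) hε
    calc exp (-(2 * c₂ / δ) * K ^ (1 + 2 * (β - α)))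
        = exp (-(2 * (2 * c₂ * (K : ℝ) ^ (-2 * (δ - β))) * (K : ℝ) ^ (-(2 * δ)) / (2 * δ))) := by
          rw [← hK_exp]; congr 1; field_simp
      _ ≤ _ := exp_neg_le_tprod_one_sub_of_le_rpow (by omega) (by positivity)
          (fun k _ => by linarith [hnonneg (ε * (k : ℝ) ^ α / (D * log k))])
          (fun k hk => by linarith [(hHbar k hk).1])
          (fun k hk => by rw [← hk_exp]; linarith [(hHbar k hk).2])
  · have hK1 : (1 : ℝ) ≤ K := by exact_mod_cast (by omega : 1 ≤ K)
    rw [ge_iff_le, exp_le_exp, neg_mul, neg_mul, neg_le_neg_iff]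
    gcongr
    simpa using rpow_le_rpow_of_exponent_le hK1 (by linarith : 1 + 2 * (β - α) ≤ 1)

/-- High-frequency prior-mass factor for the HT(α) heavy-tailed series prior with
scalings `σ_k = k^{-1/2-α}`: for a tail function `H̄` with `H̄(x) ≤ c₂/x²` for `x ≥ 1`,
`0 < β ≤ α`, `α > 1/2` and `D > 0`, there are `D'`, `C₄` such that for all `K ≥ 2` and
`ε ≥ D' K^{-β} log K`,
`∏_{k>K}(1 − 2H̄(ε k^α/(D log k))) ≥ exp(−C₄ K^{1+2(β−α)}) ≥ exp(−C₄ K)`. -/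
theorem HT_highfreq_prior_mass
    (Hbar : ℝ → ℝ) (c₂ α β D : ℝ) (hc₂ : 0 < c₂) (hα : 1 / 2 < α)
    (hβ0 : 0 < β) (hβα : β ≤ α) (hD : 0 < D)
    (hnonneg : ∀ x, 0 ≤ Hbar x) (hanti : Antitone Hbar)
    (htail : ∀ x : ℝ, 1 ≤ x → Hbar x ≤ c₂ / x ^ 2) :
    ∃ D' C₄ : ℝ, 0 < D' ∧ 0 < C₄ ∧
      ∀ K : ℕ, 2 ≤ K → ∀ ε : ℝ, D' * (K : ℝ) ^ (-β) * Real.log K ≤ ε →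
        ((∏' k : ℕ, (if K < k then
              1 - 2 * Hbar (ε * (k : ℝ) ^ α / (D * Real.log k)) else 1)) ≥
            Real.exp (-C₄ * (K : ℝ) ^ (1 + 2 * (β - α)))) ∧
          Real.exp (-C₄ * (K : ℝ) ^ (1 + 2 * (β - α))) ≥ Real.exp (-C₄ * K) :=
  HT_highfreq_prior_mass_general Hbar c₂ α β D hc₂ hα hβα hD hnonneg htail
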